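/- Let d ≥ 1, T > 0, let ω ⊂ ℝ^d be open and bounded, M₀ > 0, and K ∈ L^∞(ℝ^d). Let f : ℝ → ℝ be Lipschitz with constant L, let F ∈ L¹((0,T) × ℝ^d) be nonnegative, and let u_ε be the spike perturbation of u* ∈ U on B(x₀,ε) ⊆ ω with value w ∈ [0,M₀]. Then for any measurable function ζ_ε : ℝ^d → ℝ such that ζ_ε(x) lies between (Su_ε)(x) and (Su*)(x) for every x, one has (1/m(B(x₀,ε))) · |∫_0^T ∫_{ℝ^d} (S(u_ε − u*))(x) · (f(ζ_ε(x)) − f((Su*)(x))) · F(t,x) dx dt| ≤ L · M₀² · ‖K‖²_{L^∞} · m(B(x₀,ε)) · ‖F‖_{L¹((0,T)×ℝ^d)}; in particular this quantity tends to 0 as ε → 0⁺. -/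

import Mathlib

open MeasureTheory Filter Topology ENNReal
open scoped Classical NNReal

/-- vanishing-error estimate for spike perturbations.
With `K ∈ L^∞(ℝ^d)`, `u* ∈ U` (extended by `0` outside the open bounded `ω`),
`f` Lipschitz with constant `L`, `F ∈ L¹((0,T) × ℝ^d)` nonnegative, `u_ε` the spike
perturbation of `u*` on `B(x₀,ε)` with value `w ∈ [0,M₀]`, and `ζ_ε(x)` measurable,
lying between `(Su_ε)(x)` and `(Su*)(x)`: whenever `B(x₀,ε) ⊆ ω`,
`(1/m(B(x₀,ε))) |∫_0^T ∫ (S(u_ε - u*))(x) (f(ζ_ε(x)) - f((Su*)(x))) F(t,x) dx dt|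
  ≤ L M₀² ‖K‖_∞² m(B(x₀,ε)) ‖F‖_{L¹}`,
and in particular this quantity tends to `0` as `ε → 0⁺`. -/
theorem stmt_13 (d : ℕ) (hd : 1 ≤ d) (T : ℝ) (hT : 0 < T)
    (ω : Set (EuclideanSpace ℝ (Fin d))) (hωo : IsOpen ω) (hωbdd : Bornology.IsBounded ω)
    (M₀ : ℝ) (hM₀ : 0 < M₀)
    (K : EuclideanSpace ℝ (Fin d) → ℝ) (hK : MemLp K ∞ volume)
    (L : ℝ≥0) (f : ℝ → ℝ) (hf : LipschitzWith L f)
    (F : ℝ × EuclideanSpace ℝ (Fin d) → ℝ)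
    (hF : IntegrableOn F (Set.Ioo 0 T ×ˢ (Set.univ : Set (EuclideanSpace ℝ (Fin d)))) volume)
    (hFnn : ∀ p, 0 ≤ F p)
    (x₀ : EuclideanSpace ℝ (Fin d)) (hx₀ : x₀ ∈ ω)
    (w : ℝ) (hw : w ∈ Set.Icc 0 M₀)
    (ustar : EuclideanSpace ℝ (Fin d) → ℝ)
    (hum : AEStronglyMeasurable ustar volume)
    (hu2 : MemLp ustar 2 (volume.restrict ω))
    (hub : ∀ᵐ x ∂volume, x ∈ ω → 0 ≤ ustar x ∧ ustar x ≤ M₀)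
    (hu0 : ∀ᵐ x ∂volume, x ∉ ω → ustar x = 0)
    -- the spike perturbation `u_ε` of `u*` on `B(x₀,ε)` with value `w`
    (uε : ℝ → EuclideanSpace ℝ (Fin d) → ℝ)
    (huε : ∀ ε x, uε ε x = if x ∈ Metric.ball x₀ ε then w else ustar x)
    -- `ζ_ε(x)` measurable, lying between `(Su_ε)(x)` and `(Su*)(x)` for every `x`
    (ζ : ℝ → EuclideanSpace ℝ (Fin d) → ℝ) (hζm : ∀ ε, Measurable (ζ ε))
    (hζ : ∀ ε x, ζ ε x ∈
      Set.uIcc (∫ x', K (x - x') * uε ε x') (∫ x', K (x - x') * ustar x')) :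
    (∀ ε, 0 < ε → Metric.ball x₀ ε ⊆ ω →
      (volume (Metric.ball x₀ ε)).toReal⁻¹ *
        |∫ t in Set.Ioo 0 T, ∫ x,
            (∫ x', K (x - x') * (uε ε x' - ustar x')) *
              (f (ζ ε x) - f (∫ x', K (x - x') * ustar x')) * F (t, x)| ≤
      (L : ℝ) * M₀ ^ 2 * (eLpNorm K ∞ volume).toReal ^ 2 *
        (volume (Metric.ball x₀ ε)).toReal *
        ∫ t in Set.Ioo 0 T, ∫ x, F (t, x)) ∧
    Tendsto
      (fun ε : ℝ => (volume (Metric.ball x₀ ε)).toReal⁻¹ *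
        |∫ t in Set.Ioo 0 T, ∫ x,
            (∫ x', K (x - x') * (uε ε x' - ustar x')) *
              (f (ζ ε x) - f (∫ x', K (x - x') * ustar x')) * F (t, x)|)
      (𝓝[>] 0) (𝓝 0) := by
  have hKfin : eLpNorm K ∞ volume ≠ ∞ := hK.2.ne
  set CK : ℝ := (eLpNorm K ∞ volume).toReal with hCKdef
  have hCK0 : 0 ≤ CK := ENNReal.toReal_nonneg
  have hKae : ∀ᵐ y ∂(volume : Measure (EuclideanSpace ℝ (Fin d))), ‖K y‖ ≤ CK := by
    filter_upwards [enorm_ae_le_eLpNormEssSup K volume] with y hy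
    have h1 : ((‖K y‖₊ : ℝ≥0∞)) ≤ eLpNorm K ∞ volume := by
      rwa [eLpNorm_exponent_top]
    have := ENNReal.toReal_mono hKfin h1
    simpa [hCKdef] using this
  have hKx : ∀ x : EuclideanSpace ℝ (Fin d), ∀ᵐ x' ∂volume, ‖K (x - x')‖ ≤ CK := fun x =>
    (Measure.measurePreserving_sub_left volume x).quasiMeasurePreserving.ae hKae
  have hKxm : ∀ x : EuclideanSpace ℝ (Fin d),
      AEStronglyMeasurable (fun x' => K (x - x')) volume := fun x =>
    hK.1.comp_quasiMeasurePreserving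
      (Measure.measurePreserving_sub_left volume x).quasiMeasurePreserving
  have hωm : MeasurableSet ω := hωo.measurableSet
  have hωfin : volume ω < ∞ := hωbdd.measure_lt_top
  -- a.e. bound for `ustar`
  have hustar_bd : ∀ᵐ x' ∂(volume : Measure (EuclideanSpace ℝ (Fin d))),
      |ustar x'| ≤ Set.indicator ω (fun _ => M₀) x' := by
    filter_upwards [hub, hu0] with x' h1 h2
    by_cases hx' : x' ∈ ω
    · rw [Set.indicator_of_mem hx', abs_le]
      exact ⟨by linarith [(h1 hx').1], (h1 hx').2⟩
    · rw [Set.indicator_of_notMem hx', h2 hx']; simp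
  have hIωconst : Integrable (Set.indicator ω (fun _ => CK * M₀)) volume :=
    (integrableOn_const hωfin.ne).integrable_indicator hωm
  have hIu : ∀ x : EuclideanSpace ℝ (Fin d),
      Integrable (fun x' => K (x - x') * ustar x') volume := by
    intro x
    refine Integrable.mono' hIωconst ((hKxm x).mul hum) ?_
    filter_upwards [hKx x, hustar_bd] with x' h1 h2
    by_cases hx' : x' ∈ ω
    · rw [Set.indicator_of_mem hx']
      have h2' : |ustar x'| ≤ M₀ := by simpa [Set.indicator_of_mem hx'] using h2
      calc ‖K (x - x') * ustar x'‖ = ‖K (x - x')‖ * |ustar x'| := by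
            simp [Real.norm_eq_abs, abs_mul]
        _ ≤ CK * M₀ := mul_le_mul h1 h2' (abs_nonneg _) hCK0
    · have h0 : ustar x' = 0 := by
        have := h2; rw [Set.indicator_of_notMem hx'] at this
        exact abs_nonpos_iff.mp this
      simp only [h0, mul_zero, norm_zero]
      exact Set.indicator_nonneg (fun y _ => mul_nonneg hCK0 hM₀.le) x'
  -- integrability facts for F
  have hFprod : Integrable F
      ((volume.restrict (Set.Ioo 0 T)).prod (volume : Measure (EuclideanSpace ℝ (Fin d)))) := by
    have := hF
    rwa [IntegrableOn, Measure.volume_eq_prod, ← Measure.prod_restrict,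
      Measure.restrict_univ] at this
  have hFt : ∀ᵐ t ∂volume.restrict (Set.Ioo 0 T),
      Integrable (fun x => F (t, x)) volume := hFprod.prod_right_ae
  have hFint : Integrable (fun t => ∫ x, F (t, x)) (volume.restrict (Set.Ioo 0 T)) := by
    have h := hFprod.integral_norm_prod_left
    have heq : (fun t => ∫ x, ‖F (t, x)‖) = fun t => ∫ x, F (t, x) := by
      funext t
      exact integral_congr_ae (Filter.Eventually.of_forall fun x => by
        simp [Real.norm_eq_abs, abs_of_nonneg (hFnn _)])
    rwa [heq] at h
  have hIF_nn : 0 ≤ ∫ t in Set.Ioo 0 T, ∫ x, F (t, x) :=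
    integral_nonneg fun t => integral_nonneg fun x => hFnn _
  -- main estimate
  have key : ∀ ε, 0 < ε → Metric.ball x₀ ε ⊆ ω →
      (volume (Metric.ball x₀ ε)).toReal⁻¹ *
        |∫ t in Set.Ioo 0 T, ∫ x,
            (∫ x', K (x - x') * (uε ε x' - ustar x')) *
              (f (ζ ε x) - f (∫ x', K (x - x') * ustar x')) * F (t, x)| ≤
      (L : ℝ) * M₀ ^ 2 * CK ^ 2 * (volume (Metric.ball x₀ ε)).toReal *
        ∫ t in Set.Ioo 0 T, ∫ x, F (t, x) := by
    intro ε hε hball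
    have hBm : MeasurableSet (Metric.ball x₀ ε) := Metric.isOpen_ball.measurableSet
    set mB : ℝ := (volume (Metric.ball x₀ ε)).toReal with hmBdef
    have hmBpos : 0 < mB :=
      ENNReal.toReal_pos (Metric.measure_ball_pos volume x₀ hε).ne' measure_ball_lt_top.ne
    have hprod_eq : ∀ (x x' : EuclideanSpace ℝ (Fin d)),
        K (x - x') * (uε ε x' - ustar x') =
        Set.indicator (Metric.ball x₀ ε) (fun y => K (x - y) * (w - ustar y)) x' := by
      intro x x'; rw [huε]
      by_cases h : x' ∈ Metric.ball x₀ ε <;> simp [h]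
    have hIBconst : Integrable (Set.indicator (Metric.ball x₀ ε) (fun _ => CK * M₀)) volume :=
      (integrableOn_const measure_ball_lt_top.ne).integrable_indicator hBm
    have hbd : ∀ x : EuclideanSpace ℝ (Fin d), ∀ᵐ x' ∂volume,
        ‖K (x - x') * (uε ε x' - ustar x')‖ ≤
          Set.indicator (Metric.ball x₀ ε) (fun _ => CK * M₀) x' := by
      intro x
      filter_upwards [hKx x, hub] with x' h1 h2
      rw [hprod_eq]
      by_cases h : x' ∈ Metric.ball x₀ ε
      · rw [Set.indicator_of_mem h, Set.indicator_of_mem h]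
        have hx'ω := h2 (hball h)
        have hwu : |w - ustar x'| ≤ M₀ := by
          rw [abs_le]; rcases hw with ⟨hw1, hw2⟩
          exact ⟨by linarith [hx'ω.2], by linarith [hx'ω.1]⟩
        calc ‖K (x - x') * (w - ustar x')‖ = ‖K (x - x')‖ * |w - ustar x'| := by
              simp [Real.norm_eq_abs, abs_mul]
          _ ≤ CK * M₀ := mul_le_mul h1 hwu (abs_nonneg _) hCK0
      · rw [Set.indicator_of_notMem h, Set.indicator_of_notMem h]; simp
    have hIdiff : ∀ x : EuclideanSpace ℝ (Fin d),
        Integrable (fun x' => K (x - x') * (uε ε x' - ustar x')) volume := by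
      intro x
      refine Integrable.mono' hIBconst ?_ (hbd x)
      have : (fun x' => K (x - x') * (uε ε x' - ustar x')) =
          Set.indicator (Metric.ball x₀ ε) (fun y => K (x - y) * (w - ustar y)) := by
        funext x'; exact hprod_eq x x'
      rw [this]
      exact (((hKxm x).mul (aestronglyMeasurable_const.sub hum))).indicator hBm
    have hIuε : ∀ x : EuclideanSpace ℝ (Fin d),
        Integrable (fun x' => K (x - x') * uε ε x') volume := by
      intro x
      have heq : (fun x' => K (x - x') * uε ε x') =
          fun x' => K (x - x') * ustar x' + K (x - x') * (uε ε x' - ustar x') := by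
        funext x'; ring
      rw [heq]
      exact (hIu x).add (hIdiff x)
    -- integral bound for the first factor
    have hD : ∀ x : EuclideanSpace ℝ (Fin d),
        |∫ x', K (x - x') * (uε ε x' - ustar x')| ≤ CK * M₀ * mB := by
      intro x
      calc |∫ x', K (x - x') * (uε ε x' - ustar x')|
          ≤ ∫ x', ‖K (x - x') * (uε ε x' - ustar x')‖ := by
            simpa [Real.norm_eq_abs] using
              norm_integral_le_integral_norm (fun x' => K (x - x') * (uε ε x' - ustar x'))
        _ ≤ ∫ x', Set.indicator (Metric.ball x₀ ε) (fun _ => CK * M₀) x' :=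
            integral_mono_of_nonneg (Filter.Eventually.of_forall fun x' => norm_nonneg _)
              hIBconst (hbd x)
        _ = CK * M₀ * mB := by
            rw [integral_indicator_const _ hBm]
            simp [hmBdef, smul_eq_mul]; rw [measureReal_def]; ring
    -- Lipschitz factor bound
    have hE : ∀ x : EuclideanSpace ℝ (Fin d),
        |f (ζ ε x) - f (∫ x', K (x - x') * ustar x')| ≤ (L : ℝ) * (CK * M₀ * mB) := by
      intro x
      set a := ∫ x', K (x - x') * uε ε x'
      set b := ∫ x', K (x - x') * ustar x'
      have hlip : |f (ζ ε x) - f b| ≤ (L : ℝ) * |ζ ε x - b| := by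
        have := hf.dist_le_mul (ζ ε x) b
        simpa [Real.dist_eq] using this
      have hmem : ζ ε x ∈ Set.uIcc a b := hζ ε x
      have h2 : |ζ ε x - b| ≤ |a - b| := by
        rw [abs_sub_comm (ζ ε x) b, abs_sub_comm a b]
        exact Set.abs_sub_right_of_mem_uIcc hmem
      have hab : a - b = ∫ x', K (x - x') * (uε ε x' - ustar x') := by
        rw [← integral_sub (hIuε x) (hIu x)]
        congr 1; funext x'; ring
      have h3 : |a - b| ≤ CK * M₀ * mB := by rw [hab]; exact hD x
      calc |f (ζ ε x) - f b| ≤ (L : ℝ) * |ζ ε x - b| := hlip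
        _ ≤ (L : ℝ) * |a - b| := by
            exact mul_le_mul_of_nonneg_left h2 L.coe_nonneg
        _ ≤ (L : ℝ) * (CK * M₀ * mB) := mul_le_mul_of_nonneg_left h3 L.coe_nonneg
    set Cf : ℝ := (CK * M₀ * mB) * ((L : ℝ) * (CK * M₀ * mB)) with hCf
    have hCf0 : 0 ≤ Cf := by positivity
    have hptwise : ∀ (t : ℝ) (x : EuclideanSpace ℝ (Fin d)),
        ‖(∫ x', K (x - x') * (uε ε x' - ustar x')) *
            (f (ζ ε x) - f (∫ x', K (x - x') * ustar x')) * F (t, x)‖ ≤ Cf * F (t, x) := by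
      intro t x
      rw [Real.norm_eq_abs, abs_mul, abs_mul, abs_of_nonneg (hFnn _)]
      have h1 := hD x
      have h2 := hE x
      have : |∫ x', K (x - x') * (uε ε x' - ustar x')| *
          |f (ζ ε x) - f (∫ x', K (x - x') * ustar x')| ≤ Cf :=
        mul_le_mul h1 h2 (abs_nonneg _) (by positivity)
      exact mul_le_mul_of_nonneg_right this (hFnn _)
    have main : |∫ t in Set.Ioo 0 T, ∫ x,
        (∫ x', K (x - x') * (uε ε x' - ustar x')) *
          (f (ζ ε x) - f (∫ x', K (x - x') * ustar x')) * F (t, x)| ≤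
        Cf * ∫ t in Set.Ioo 0 T, ∫ x, F (t, x) := by
      calc |∫ t in Set.Ioo 0 T, ∫ x,
          (∫ x', K (x - x') * (uε ε x' - ustar x')) *
            (f (ζ ε x) - f (∫ x', K (x - x') * ustar x')) * F (t, x)|
          ≤ ∫ t in Set.Ioo 0 T, ‖∫ x,
            (∫ x', K (x - x') * (uε ε x' - ustar x')) *
              (f (ζ ε x) - f (∫ x', K (x - x') * ustar x')) * F (t, x)‖ := by
            simpa [Real.norm_eq_abs] using
              norm_integral_le_integral_norm (μ := volume.restrict (Set.Ioo 0 T))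
                (fun t => ∫ x, (∫ x', K (x - x') * (uε ε x' - ustar x')) *
                  (f (ζ ε x) - f (∫ x', K (x - x') * ustar x')) * F (t, x))
        _ ≤ ∫ t in Set.Ioo 0 T, Cf * ∫ x, F (t, x) := by
            refine integral_mono_of_nonneg
              (Filter.Eventually.of_forall fun t => norm_nonneg _)
              (hFint.const_mul Cf) ?_
            filter_upwards [hFt] with t ht
            calc ‖∫ x, (∫ x', K (x - x') * (uε ε x' - ustar x')) *
                  (f (ζ ε x) - f (∫ x', K (x - x') * ustar x')) * F (t, x)‖
                ≤ ∫ x, ‖(∫ x', K (x - x') * (uε ε x' - ustar x')) *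
                  (f (ζ ε x) - f (∫ x', K (x - x') * ustar x')) * F (t, x)‖ :=
                  norm_integral_le_integral_norm _
              _ ≤ ∫ x, Cf * F (t, x) :=
                  integral_mono_of_nonneg
                    (Filter.Eventually.of_forall fun x => norm_nonneg _)
                    (ht.const_mul Cf)
                    (Filter.Eventually.of_forall fun x => hptwise t x)
              _ = Cf * ∫ x, F (t, x) := integral_const_mul _ _
        _ = Cf * ∫ t in Set.Ioo 0 T, ∫ x, F (t, x) := integral_const_mul _ _
    calc mB⁻¹ * |∫ t in Set.Ioo 0 T, ∫ x,
          (∫ x', K (x - x') * (uε ε x' - ustar x')) *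
            (f (ζ ε x) - f (∫ x', K (x - x') * ustar x')) * F (t, x)|
        ≤ mB⁻¹ * (Cf * ∫ t in Set.Ioo 0 T, ∫ x, F (t, x)) :=
          mul_le_mul_of_nonneg_left main (inv_nonneg.mpr hmBpos.le)
      _ = (L : ℝ) * M₀ ^ 2 * CK ^ 2 * mB * ∫ t in Set.Ioo 0 T, ∫ x, F (t, x) := by
          rw [hCf]
          field_simp
  refine ⟨key, ?_⟩
  -- the limit statement
  haveI : Nonempty (Fin d) := Fin.pos_iff_nonempty.mp hd
  obtain ⟨δ, hδpos, hδ⟩ := Metric.isOpen_iff.1 hωo x₀ hx₀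
  set C : ℝ := (L : ℝ) * M₀ ^ 2 * CK ^ 2 * ∫ t in Set.Ioo 0 T, ∫ x, F (t, x) with hC
  have hC0 : 0 ≤ C := by positivity
  have hmB_tendsto :
      Tendsto (fun ε : ℝ => (volume (Metric.ball x₀ ε)).toReal) (𝓝[>] 0) (𝓝 0) := by
    have hcont : Tendsto (fun ε : ℝ =>
        ε ^ d * (volume (Metric.ball (0 : EuclideanSpace ℝ (Fin d)) 1)).toReal)
        (𝓝[>] 0) (𝓝 0) := by
      have h1 : Tendsto (fun ε : ℝ =>
          ε ^ d * (volume (Metric.ball (0 : EuclideanSpace ℝ (Fin d)) 1)).toReal)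
          (𝓝 0) (𝓝 0) := by
        have hd0 : d ≠ 0 := by omega
        have := ((continuous_pow d).tendsto (0 : ℝ)).mul_const
          (volume (Metric.ball (0 : EuclideanSpace ℝ (Fin d)) 1)).toReal
        simpa [zero_pow hd0] using this
      exact h1.mono_left nhdsWithin_le_nhds
    refine hcont.congr' ?_
    filter_upwards [self_mem_nhdsWithin] with ε (hε : 0 < ε)
    rw [Measure.addHaar_ball volume x₀ hε.le, ENNReal.toReal_mul,
      ENNReal.toReal_ofReal (by positivity), finrank_euclideanSpace, Fintype.card_fin]
  have hsq : Tendsto (fun ε : ℝ => C * (volume (Metric.ball x₀ ε)).toReal) (𝓝[>] 0) (𝓝 0) := by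
    simpa using hmB_tendsto.const_mul C
  refine squeeze_zero' ?_ ?_ hsq
  · filter_upwards with ε
    positivity
  · filter_upwards [Ioo_mem_nhdsGT_of_mem ⟨le_refl (0 : ℝ), hδpos⟩] with ε hε
    have hball : Metric.ball x₀ ε ⊆ ω :=
      (Metric.ball_subset_ball hε.2.le).trans hδ
    have := key ε hε.1 hball
    calc (volume (Metric.ball x₀ ε)).toReal⁻¹ *
        |∫ t in Set.Ioo 0 T, ∫ x,
            (∫ x', K (x - x') * (uε ε x' - ustar x')) *
              (f (ζ ε x) - f (∫ x', K (x - x') * ustar x')) * F (t, x)|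
        ≤ (L : ℝ) * M₀ ^ 2 * CK ^ 2 * (volume (Metric.ball x₀ ε)).toReal *
            ∫ t in Set.Ioo 0 T, ∫ x, F (t, x) := this
      _ = C * (volume (Metric.ball x₀ ε)).toReal := by rw [hC]; ring
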